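/- arXiv:1407.4962 — 2 statements merged into one kernel-verified Lean document; each statement's English description precedes it below -/
import Mathlib

section
/- Let u be a nonempty string over an alphabet and suppose u = v^k, the concatenation of k ≥ 1 copies of a primitive string v. If v is symmetric, then the dihedral orbit of u has exactly p(u) elements; if v is asymmetric, then the dihedral orbit of u has exactly 2·p(u) elements. -/
open scoped Classical

/-- Cyclic shift `α`: maps `u₁u₂⋯uₙ` to `uₙu₁⋯uₙ₋₁`. -/
def cyc {α : Type*} (u : List α) : List α := u.rotate (u.length - 1)

/-- `listPow v k` is the concatenation of `k` copies of `v`. -/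
def listPow {α : Type*} (v : List α) (k : ℕ) : List α := (List.replicate k v).flatten

/-- The period of `u`: the least `k > 0` with `cyc^[k] u = u`. -/
noncomputable def period {α : Type*} (u : List α) : ℕ := sInf {k | 0 < k ∧ cyc^[k] u = u}

/-- `u` is primitive if it is not the concatenation of `k ≥ 2` copies of a shorter string. -/
def IsPrimitive {α : Type*} (u : List α) : Prop :=
  ∀ (v : List α) (k : ℕ), 2 ≤ k → v.length < u.length → u ≠ listPow v k

/-- The dihedral orbit of `u`: `{α^j(u) : 0 ≤ j < n} ∪ {α^j(β(u)) : 0 ≤ j < n}`,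
where `β` is reversal. -/
noncomputable def dihedralOrbit {α : Type*} [DecidableEq α] (u : List α) : Finset (List α) :=
  ((Finset.range u.length).image fun j => cyc^[j] u) ∪
    ((Finset.range u.length).image fun j => cyc^[j] u.reverse)

/-- Lucas numbers: `L₀ = 2`, `L₁ = 1`, `Lₙ = Lₙ₋₁ + Lₙ₋₂`. -/
def lucas : ℕ → ℕ
  | 0 => 2
  | 1 => 1
  | n + 2 => lucas (n + 1) + lucas n

/-- All binary strings of length `n`, as a finset of boolean lists. -/
def allBool (n : ℕ) : Finset (List Bool) :=
  (Finset.univ : Finset (Fin n → Bool)).image fun f => List.ofFn f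

/-- A Fibonacci string: a binary string with no two consecutive 1s. -/
def IsFibStr (l : List Bool) : Prop := l.Chain' fun a b => a = false ∨ b = false

/-- The Fibonacci strings of length `n` (vertices of the Fibonacci cube `Γₙ`). -/
noncomputable def fibStrings (n : ℕ) : Finset (List Bool) := (allBool n).filter IsFibStr

/-- A Lucas string: a binary string with no two consecutive 1s which does not both
begin and end with 1. -/
def IsLucasStr (l : List Bool) : Prop :=
  IsFibStr l ∧ ¬(l.head? = some true ∧ l.getLast? = some true)

/-- The Lucas strings of length `n` (vertices of the Lucas cube `Λₙ`). -/
noncomputable def lucasStrings (n : ℕ) : Finset (List Bool) := (allBool n).filter IsLucasStr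

/-- Two strings differ in exactly one position. -/
def DifferOne (u v : List Bool) : Prop :=
  u.length = v.length ∧ (List.zipWith (fun a b => a != b) u v).count true = 1

/-- The edges of the Fibonacci cube `Γₙ`, as unordered pairs of vertices. -/
noncomputable def fibEdges (n : ℕ) : Finset (Finset (List Bool)) :=
  ((fibStrings n ×ˢ fibStrings n).filter fun p => DifferOne p.1 p.2).image fun p => {p.1, p.2}

/-- The edges of the Lucas cube `Λₙ`, as unordered pairs of vertices. -/
noncomputable def lucasEdges (n : ℕ) : Finset (Finset (List Bool)) :=
  ((lucasStrings n ×ˢ lucasStrings n).filter fun p => DifferOne p.1 p.2).image fun p => {p.1, p.2}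

/-- The orbit of a vertex under the reversal map `β`. -/
def revOrbit (u : List Bool) : Finset (List Bool) := {u, u.reverse}

/-- The orbit of an edge under the reversal map `β`, acting by `β({u,v}) = {β(u),β(v)}`. -/
def revEdgeOrbit (e : Finset (List Bool)) : Finset (Finset (List Bool)) :=
  {e, e.image List.reverse}

/-- The orbit of an edge under the dihedral action on strings of length `n`:
`{α^j(e) : 0 ≤ j < n} ∪ {α^j(β(e)) : 0 ≤ j < n}`. -/
noncomputable def dihedralEdgeOrbit (n : ℕ) (e : Finset (List Bool)) :
    Finset (Finset (List Bool)) :=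
  ((Finset.range n).image fun j => e.image fun u => cyc^[j] u) ∪
    ((Finset.range n).image fun j => e.image fun u => cyc^[j] u.reverse)

/-
The dihedral orbit of a nonempty word `w` is the union of the rotation classes of `w` and of its
reversal `wᴿ`. Since `cyc` inverts the rotation by one letter, the rotation class of `w` is its
`cyc`-orbit and has `period w` elements; reversal maps it bijectively onto the class of `wᴿ`.
Two rotation classes are equal or disjoint, so the orbit has `period w` or `2 * period w`
elements according as `wᴿ` is a rotation of `w` or not.

For a primitive `v`, a rotation by `d = period v` fixing `v` makes `v` commute with its prefix of
length `d`, so `v` is a power of that prefix and `period v = |v|`; hence `v` is symmetric exactly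
when `vᴿ` is a rotation of `v`. Rotating `vᵏ` by `r` gives `(v.rotate r)ᵏ` and `(vᵏ)ᴿ = (vᴿ)ᵏ`,
so `(vᵏ)ᴿ` is a rotation of `vᵏ` exactly when `vᴿ` is a rotation of `v`.
-/

open Function List

theorem Function.card_image_range_iterate {α : Type*} [DecidableEq α] {f : α → α} {x : α}
    {n : ℕ} (hn : 0 < n) (hx : IsPeriodicPt f n x) :
    ((Finset.range n).image (f^[·] x)).card = minimalPeriod f x := by
  have hpos := hx.minimalPeriod_pos hn
  have himage : (Finset.range n).image (f^[·] x) =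
      (Finset.range (minimalPeriod f x)).image (f^[·] x) := by
    ext y
    simp only [Finset.mem_image, Finset.mem_range]
    constructor
    · rintro ⟨j, -, rfl⟩
      exact ⟨j % minimalPeriod f x, Nat.mod_lt j hpos, iterate_mod_minimalPeriod_eq⟩
    · rintro ⟨j, hj, rfl⟩
      exact ⟨j, hj.trans_le (hx.minimalPeriod_le hn), rfl⟩
  rw [himage, Finset.card_image_of_injOn, Finset.card_range]
  simpa only [Finset.coe_range] using iterate_injOn_Iio_minimalPeriod

section ListPow

variable {α : Type*}

theorem listPow_succ (v : List α) (k : ℕ) : listPow v (k + 1) = v ++ listPow v k := by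
  simp [listPow, replicate_succ]

theorem listPow_nil (k : ℕ) : listPow ([] : List α) k = [] := by
  simp [listPow]

theorem length_listPow (v : List α) (k : ℕ) : (listPow v k).length = k * v.length := by
  induction k with
  | zero => simp [listPow]
  | succ k ih => rw [listPow_succ, length_append, ih, add_one_mul, add_comm]

theorem listPow_append_comm (v : List α) (k : ℕ) : listPow v k ++ v = v ++ listPow v k := by
  induction k with
  | zero => simp [listPow]
  | succ k ih => rw [listPow_succ, append_assoc, ih]

theorem reverse_listPow (v : List α) (k : ℕ) : (listPow v k).reverse = listPow v.reverse k := by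
  induction k with
  | zero => rfl
  | succ k ih => rw [listPow_succ, ← listPow_append_comm, reverse_append, ih, listPow_succ]

theorem listPow_append_append (x y : List α) (k : ℕ) :
    listPow (x ++ y) k ++ x = x ++ listPow (y ++ x) k := by
  induction k with
  | zero => simp [listPow]
  | succ k ih => simp only [listPow_succ, append_assoc, ih]

theorem rotate_one_listPow (v : List α) (k : ℕ) :
    (listPow v k).rotate 1 = listPow (v.rotate 1) k := by
  rcases v with _ | ⟨a, w⟩
  · simp [listPow_nil]
  cases k with
  | zero => rfl
  | succ k =>
    rw [listPow_succ, cons_append, rotate_cons_succ, rotate_zero, rotate_cons_succ, rotate_zero,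
      listPow_succ, append_assoc, ← singleton_append (x := a) (l := w), listPow_append_append,
      append_assoc]

theorem rotate_listPow (v : List α) (k r : ℕ) :
    (listPow v k).rotate r = listPow (v.rotate r) k := by
  induction r with
  | zero => simp
  | succ r ih => rw [← rotate_rotate, ih, rotate_one_listPow, rotate_rotate]

theorem listPow_left_injective {k : ℕ} (hk : k ≠ 0) :
    Injective (fun v : List α => listPow v k) := by
  intro x y h
  have hlen : x.length = y.length := by
    have := congrArg length h
    simp only [length_listPow] at this
    exact Nat.eq_of_mul_eq_mul_left (Nat.pos_of_ne_zero hk) this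
  obtain ⟨k, rfl⟩ := Nat.exists_eq_succ_of_ne_zero hk
  simp only [listPow_succ] at h
  exact (append_inj h hlen).1

theorem reverse_isRotated_listPow_iff {v : List α} {k : ℕ} (hk : k ≠ 0) :
    (listPow v k).reverse ~r listPow v k ↔ v.reverse ~r v := by
  rw [isRotated_comm, reverse_listPow, isRotated_comm (l := v.reverse)]
  simp only [IsRotated, rotate_listPow, (listPow_left_injective hk).eq_iff]

theorem eq_listPow_of_append_comm {t w : List α} {q : ℕ} (h : t ++ w = w ++ t)
    (hw : w.length = q * t.length) : w = listPow t q := by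
  induction q generalizing w with
  | zero => simpa [listPow] using hw
  | succ q ih =>
    have hle : t.length ≤ w.length := by rw [hw]; exact Nat.le_mul_of_pos_left _ q.succ_pos
    have hprefix : w.take t.length = t := by
      have := congrArg (take t.length) h
      rwa [take_left, take_append_of_le_length hle, eq_comm] at this
    obtain ⟨w', rfl⟩ : ∃ w', w = t ++ w' :=
      ⟨w.drop t.length, by nth_rw 1 [← take_append_drop t.length w, hprefix]⟩
    rw [append_assoc] at h
    rw [length_append, add_one_mul, add_comm] at hw
    rw [listPow_succ, ih (append_cancel_left h) (Nat.add_right_cancel hw)]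

end ListPow

theorem IsPrimitive.length_le_of_rotate_eq_self {α : Type*} {v : List α} (hv : IsPrimitive v)
    {d : ℕ} (hd : 0 < d) (hdvd : d ∣ v.length) (hrot : v.rotate d = v) : v.length ≤ d := by
  by_contra! hlt
  obtain ⟨m, hm⟩ := hdvd
  have hm2 : 2 ≤ m := by
    by_contra!
    interval_cases m <;> omega
  set t := v.take d
  have ht : t.length = d := length_take_of_le hlt.le
  have hcomm : t ++ v.drop d = v.drop d ++ t := by
    rw [take_append_drop, ← rotate_eq_drop_append_take hlt.le, hrot]
  have hdrop : v.drop d = listPow t (m - 1) := by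
    refine eq_listPow_of_append_comm hcomm ?_
    rw [length_drop, ht, hm, Nat.sub_one_mul, mul_comm]
  refine hv t m hm2 (ht ▸ hlt) ?_
  rw [← take_append_drop d v, hdrop, ← listPow_succ, Nat.sub_add_cancel (by omega)]

section Cyc

variable {α : Type*}

theorem cyc_rotate_one (l : List α) : cyc (l.rotate 1) = l := by
  rcases eq_or_ne l [] with rfl | hl
  · rfl
  rw [cyc, length_rotate, rotate_rotate, Nat.add_sub_cancel' (length_pos_iff.2 hl), rotate_length]

theorem rotate_one_cyc (l : List α) : (cyc l).rotate 1 = l := by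
  rcases eq_or_ne l [] with rfl | hl
  · rfl
  rw [cyc, rotate_rotate, Nat.sub_add_cancel (length_pos_iff.2 hl), rotate_length]

theorem iterate_cyc_rotate (l : List α) (n : ℕ) : cyc^[n] (l.rotate n) = l := by
  induction n with
  | zero => simp
  | succ n ih => rw [iterate_succ_apply, ← rotate_rotate, cyc_rotate_one, ih]

theorem rotate_iterate_cyc (l : List α) (n : ℕ) : (cyc^[n] l).rotate n = l := by
  induction n with
  | zero => simp
  | succ n ih => rw [iterate_succ_apply', add_comm, ← rotate_rotate, rotate_one_cyc, ih]

theorem isPeriodicPt_cyc_iff {l : List α} {n : ℕ} : IsPeriodicPt cyc n l ↔ l.rotate n = l := by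
  constructor
  · intro h
    conv_lhs => rw [← h.eq]
    exact rotate_iterate_cyc l n
  · intro h
    change cyc^[n] l = l
    conv_lhs => rw [← h]
    exact iterate_cyc_rotate l n

theorem period_eq_minimalPeriod (l : List α) : period l = minimalPeriod cyc l :=
  minimalPeriod_eq_sInf_n_pos_IsPeriodicPt.symm

theorem IsPrimitive.period_eq_length {v : List α} (hv : IsPrimitive v) (hv0 : v ≠ []) :
    period v = v.length := by
  have hlen : 0 < v.length := length_pos_iff.2 hv0
  have hper : IsPeriodicPt cyc v.length v := isPeriodicPt_cyc_iff.2 (rotate_length v)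
  rw [period_eq_minimalPeriod]
  exact le_antisymm (Nat.le_of_dvd hlen hper.minimalPeriod_dvd)
    (hv.length_le_of_rotate_eq_self (hper.minimalPeriod_pos hlen) hper.minimalPeriod_dvd
      (isPeriodicPt_cyc_iff.1 (isPeriodicPt_minimalPeriod cyc v)))

end Cyc

section DihedralOrbit

variable {α : Type*} [DecidableEq α]

theorem image_range_iterate_cyc {l : List α} (hl : l ≠ []) :
    (Finset.range l.length).image (cyc^[·] l) = l.cyclicPermutations.toFinset := by
  ext w
  simp only [Finset.mem_image, Finset.mem_range, mem_toFinset, mem_cyclicPermutations_iff]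
  constructor
  · rintro ⟨j, -, rfl⟩
    conv_rhs => rw [← rotate_iterate_cyc l j]
    exact (IsRotated.forall _ j).symm
  · rintro ⟨j, hj⟩
    refine ⟨j % l.length, Nat.mod_lt j (length_pos_iff.2 hl), ?_⟩
    rw [← hj, length_rotate, ← rotate_mod w j, iterate_cyc_rotate]

theorem card_cyclicPermutations_toFinset {l : List α} (hl : l ≠ []) :
    l.cyclicPermutations.toFinset.card = period l := by
  rw [← image_range_iterate_cyc hl, period_eq_minimalPeriod]
  exact card_image_range_iterate (length_pos_iff.2 hl) (isPeriodicPt_cyc_iff.2 (rotate_length l))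

theorem cyclicPermutations_reverse_toFinset (l : List α) :
    l.reverse.cyclicPermutations.toFinset = l.cyclicPermutations.toFinset.image reverse := by
  ext w
  simp only [Finset.mem_image, mem_toFinset, mem_cyclicPermutations_iff]
  exact ⟨fun h => ⟨w.reverse, isRotated_reverse_comm_iff.2 h, reverse_reverse w⟩,
    fun ⟨w', h, hw'⟩ => hw' ▸ isRotated_reverse_comm_iff.1 (by rwa [reverse_reverse])⟩

theorem dihedralOrbit_eq_union {l : List α} (hl : l ≠ []) :
    dihedralOrbit l = l.cyclicPermutations.toFinset ∪ l.reverse.cyclicPermutations.toFinset := by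
  rw [dihedralOrbit, image_range_iterate_cyc hl, ← length_reverse,
    image_range_iterate_cyc (reverse_ne_nil_iff.2 hl)]

theorem card_dihedralOrbit_of_isRotated {l : List α} (hl : l ≠ [])
    (h : l.reverse ~r l) : (dihedralOrbit l).card = period l := by
  have hsame : l.reverse.cyclicPermutations.toFinset = l.cyclicPermutations.toFinset := by
    ext w
    simp only [mem_toFinset, mem_cyclicPermutations_iff]
    exact ⟨fun hw => hw.trans h, fun hw => hw.trans h.symm⟩
  rw [dihedralOrbit_eq_union hl, hsame, Finset.union_self, card_cyclicPermutations_toFinset hl]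

theorem card_dihedralOrbit_of_not_isRotated {l : List α} (hl : l ≠ [])
    (h : ¬l.reverse ~r l) : (dihedralOrbit l).card = 2 * period l := by
  have hdisj : Disjoint l.cyclicPermutations.toFinset l.reverse.cyclicPermutations.toFinset := by
    rw [Finset.disjoint_left]
    intro w hw hw'
    simp only [mem_toFinset, mem_cyclicPermutations_iff] at hw hw'
    exact h (hw'.symm.trans hw)
  rw [dihedralOrbit_eq_union hl, Finset.card_union_of_disjoint hdisj,
    cyclicPermutations_reverse_toFinset, Finset.card_image_of_injective _ reverse_injective,
    card_cyclicPermutations_toFinset hl, two_mul]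

end DihedralOrbit

/-- Let `u = v^k` with `k ≥ 1` and `v` primitive. If `v` is symmetric then the dihedral
orbit of `u` has `p(u)` elements; if `v` is asymmetric it has `2·p(u)` elements. -/
theorem card_dihedralOrbit_of_pow_primitive {α : Type*} [DecidableEq α]
    (u v : List α) (k : ℕ) (hu : u ≠ []) (hk : 1 ≤ k)
    (hv : IsPrimitive v) (huv : u = listPow v k) :
    ((dihedralOrbit v).card < 2 * v.length → (dihedralOrbit u).card = period u) ∧
    ((dihedralOrbit v).card = 2 * v.length → (dihedralOrbit u).card = 2 * period u) := by
  have hv0 : v ≠ [] := by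
    rintro rfl
    exact hu (huv.trans (listPow_nil k))
  have hrev : u.reverse ~r u ↔ v.reverse ~r v :=
    huv ▸ reverse_isRotated_listPow_iff (Nat.one_le_iff_ne_zero.1 hk)
  have hperiod := hv.period_eq_length hv0
  refine ⟨fun hsym => ?_, fun hasym => ?_⟩
  · have hvsym : v.reverse ~r v := by
      by_contra h
      rw [card_dihedralOrbit_of_not_isRotated hv0 h, hperiod] at hsym
      exact lt_irrefl _ hsym
    exact card_dihedralOrbit_of_isRotated hu (hrev.2 hvsym)
  · have hvasym : ¬v.reverse ~r v := by
      intro h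
      rw [card_dihedralOrbit_of_isRotated hv0 h, hperiod] at hasym
      have := length_pos_iff.2 hv0
      omega
    exact card_dihedralOrbit_of_not_isRotated hu (mt hrev.1 hvasym)
end

section
/- For every integer n ≥ 2, consider the action of the reversal map β on the set of Fibonacci strings of length n (for n ≥ 2, the automorphism group of the Fibonacci cube Γ_n consists exactly of the identity and β, so these orbits are the vertex orbits of Γ_n). Then: the number of orbits of size 1 equals F_{⌊(n−(−1)^n)/2⌋+2}; the number of orbits of size 2 equals (F_{n+2} − F_{⌊(n−(−1)^n)/2⌋+2})/2; and the total number of orbits equals (F_{n+2} + F_{⌊(n−(−1)^n)/2⌋+2})/2. -/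
open scoped Classical

/-! Reversal is an involution, so its orbits have one or two elements, the Fibonacci strings
split as `#(orbits of size 1) + 2 · #(orbits of size 2)`, and the orbits of size 1 are the
palindromic Fibonacci strings. A palindrome of length `2k + 1` is determined by its first
`k + 1` letters, which form an arbitrary Fibonacci string; one of length `2k + 2` by its first
`k + 1` letters, which form a Fibonacci string ending in `0`, i.e. a Fibonacci string of length
`k` followed by `0`. So there are `F_{k+3}` resp. `F_{k+2}` palindromes, which is
`F_{⌊(n−(−1)ⁿ)/2⌋+2}` in both cases. -/

lemma List.take_append_reverse_take_of_reverse_eq_self {α : Type*} {u : List α}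
    (hu : u.reverse = u) {a b : ℕ} (hab : a + b = u.length) :
    u.take a ++ (u.take b).reverse = u := by
  rw [List.reverse_take, hu, show u.length - b = a by omega, List.take_append_drop]

lemma List.append_reverse_dropLast {α : Type*} (l : List α) :
    l ++ l.dropLast.reverse = l.dropLast ++ l.reverse := by
  rcases List.eq_nil_or_concat l with rfl | ⟨x, c, rfl⟩ <;> simp

section PairOrbit

variable {α : Type*} [DecidableEq α] {f : α → α}

def pairOrbit (f : α → α) (x : α) : Finset α := {x, f x}

lemma mem_pairOrbit {x y : α} : y ∈ pairOrbit f x ↔ y = x ∨ y = f x := by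
  rw [pairOrbit, Finset.mem_insert, Finset.mem_singleton]

lemma pairOrbit_eq_iff_mem (hf : Function.Involutive f) {x y : α} :
    pairOrbit f y = pairOrbit f x ↔ y ∈ pairOrbit f x := by
  constructor
  · intro h
    exact h ▸ mem_pairOrbit.2 (.inl rfl)
  · rw [mem_pairOrbit]
    rintro (rfl | rfl)
    · rfl
    · rw [pairOrbit, pairOrbit, hf x, Finset.pair_comm]

lemma card_pairOrbit_eq_one_iff {x : α} : (pairOrbit f x).card = 1 ↔ f x = x := by
  by_cases h : f x = x
  · simp [pairOrbit, h]
  · simp [pairOrbit, Finset.card_pair (Ne.symm h), h]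

lemma card_pairOrbit_eq_one_or_two (x : α) :
    (pairOrbit f x).card = 1 ∨ (pairOrbit f x).card = 2 :=
  Finset.card_pair_eq_one_or_two

variable (s : Finset α)

lemma card_filter_image_pairOrbit_card_eq_one :
    ((s.image (pairOrbit f)).filter fun O => O.card = 1).card =
      (s.filter fun x => f x = x).card := by
  rw [Finset.filter_image, Finset.card_image_of_injOn]
  · simp only [card_pairOrbit_eq_one_iff]
  · intro x hx y hy hxy
    simp only [Finset.coe_filter, card_pairOrbit_eq_one_iff] at hx hy
    simpa [pairOrbit, hx.2, hy.2] using hxy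

lemma filter_image_pairOrbit_card_ne_one :
    ((s.image (pairOrbit f)).filter fun O => ¬O.card = 1) =
      (s.image (pairOrbit f)).filter fun O => O.card = 2 := by
  refine Finset.filter_congr fun O hO => ?_
  obtain ⟨x, -, rfl⟩ := Finset.mem_image.1 hO
  rcases card_pairOrbit_eq_one_or_two (f := f) x with h | h <;> simp [h]

lemma card_image_pairOrbit :
    (s.image (pairOrbit f)).card = ((s.image (pairOrbit f)).filter fun O => O.card = 1).card +
      ((s.image (pairOrbit f)).filter fun O => O.card = 2).card := by
  rw [← filter_image_pairOrbit_card_ne_one, Finset.card_filter_add_card_filter_not]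

lemma card_eq_sum_card_pairOrbit {s : Finset α} (hf : Function.Involutive f)
    (hs : ∀ x ∈ s, f x ∈ s) : s.card = ∑ O ∈ s.image (pairOrbit f), O.card := by
  rw [Finset.card_eq_sum_card_image (pairOrbit f) s]
  refine Finset.sum_congr rfl fun O hO => ?_
  obtain ⟨x, hx, rfl⟩ := Finset.mem_image.1 hO
  congr 1
  ext y
  rw [Finset.mem_filter, pairOrbit_eq_iff_mem hf, and_iff_right_iff_imp, mem_pairOrbit]
  rintro (rfl | rfl)
  exacts [hx, hs x hx]

lemma card_eq_card_pairOrbit_one_add_two_mul {s : Finset α} (hf : Function.Involutive f)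
    (hs : ∀ x ∈ s, f x ∈ s) :
    s.card = ((s.image (pairOrbit f)).filter fun O => O.card = 1).card +
      2 * ((s.image (pairOrbit f)).filter fun O => O.card = 2).card := by
  rw [card_eq_sum_card_pairOrbit hf hs, ← Finset.sum_filter_add_sum_filter_not _
    (fun O => O.card = 1), filter_image_pairOrbit_card_ne_one,
    Finset.sum_const_nat fun O hO => (Finset.mem_filter.1 hO).2,
    Finset.sum_const_nat fun O hO => (Finset.mem_filter.1 hO).2, mul_one, mul_comm]

end PairOrbit

lemma mem_allBool {u : List Bool} {n : ℕ} : u ∈ allBool n ↔ u.length = n := by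
  constructor
  · intro hu
    obtain ⟨f, -, rfl⟩ := Finset.mem_image.1 hu
    exact List.length_ofFn
  · rintro rfl
    exact Finset.mem_image.2 ⟨fun i => u[(i : ℕ)], Finset.mem_univ _, List.ofFn_getElem⟩

lemma mem_fibStrings {u : List Bool} {n : ℕ} :
    u ∈ fibStrings n ↔ u.length = n ∧ IsFibStr u := by
  rw [fibStrings, Finset.mem_filter, mem_allBool]

lemma isFibStr_iff_isChain {u : List Bool} :
    IsFibStr u ↔ u.IsChain fun a b => a = false ∨ b = false :=
  Iff.rfl

lemma isFibStr_reverse {u : List Bool} : IsFibStr u.reverse ↔ IsFibStr u := by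
  simp only [isFibStr_iff_isChain, List.isChain_reverse, or_comm]

lemma reverse_mem_fibStrings {u : List Bool} {n : ℕ} (hu : u ∈ fibStrings n) :
    u.reverse ∈ fibStrings n := by
  obtain ⟨hlen, hu⟩ := mem_fibStrings.1 hu
  exact mem_fibStrings.2 ⟨by rw [List.length_reverse, hlen], isFibStr_reverse.2 hu⟩

lemma IsFibStr.take {u : List Bool} (h : IsFibStr u) (m : ℕ) : IsFibStr (u.take m) :=
  List.IsChain.take h m

lemma isFibStr_cons_false {u : List Bool} : IsFibStr (false :: u) ↔ IsFibStr u := by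
  simp [isFibStr_iff_isChain, List.isChain_cons]

lemma isFibStr_append_false {u : List Bool} : IsFibStr (u ++ [false]) ↔ IsFibStr u := by
  rw [← isFibStr_reverse, List.reverse_append, List.reverse_singleton, List.singleton_append,
    isFibStr_cons_false, isFibStr_reverse]

lemma isFibStr_true_cons_cons {b : Bool} {u : List Bool} :
    IsFibStr (true :: b :: u) ↔ b = false ∧ IsFibStr u := by
  rw [isFibStr_iff_isChain, List.isChain_cons_cons, ← isFibStr_iff_isChain]
  constructor
  · rintro ⟨hb | hb, h⟩
    · cases hb
    · subst hb
      exact ⟨rfl, isFibStr_cons_false.1 h⟩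
  · rintro ⟨rfl, h⟩
    exact ⟨.inr rfl, isFibStr_cons_false.2 h⟩

lemma fibStrings_add_two (n : ℕ) :
    fibStrings (n + 2) = (fibStrings (n + 1)).image (List.cons false) ∪
      (fibStrings n).image fun u => true :: false :: u := by
  ext u
  simp only [Finset.mem_union, Finset.mem_image, mem_fibStrings]
  constructor
  · rintro ⟨hlen, hu⟩
    match u, hlen, hu with
    | false :: t, hlen, hu =>
      exact .inl ⟨t, ⟨by simpa using hlen, isFibStr_cons_false.1 hu⟩, rfl⟩
    | true :: b :: t, hlen, hu =>
      obtain ⟨rfl, ht⟩ := isFibStr_true_cons_cons.1 hu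
      exact .inr ⟨t, ⟨by simpa using hlen, ht⟩, rfl⟩
  · rintro (⟨t, ⟨ht, ht'⟩, rfl⟩ | ⟨t, ⟨ht, ht'⟩, rfl⟩)
    · exact ⟨by simp [ht], isFibStr_cons_false.2 ht'⟩
    · exact ⟨by simp [ht], isFibStr_true_cons_cons.2 ⟨rfl, ht'⟩⟩

lemma card_fibStrings (n : ℕ) : (fibStrings n).card = Nat.fib (n + 2) := by
  induction n using Nat.twoStepInduction with
  | zero =>
    rw [show Nat.fib (0 + 2) = 1 from rfl, Finset.card_eq_one]
    exact ⟨[], by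
      ext u; simp +contextual [mem_fibStrings, List.length_eq_zero_iff, isFibStr_iff_isChain]⟩
  | one =>
    rw [show Nat.fib (1 + 2) = 2 from rfl, Finset.card_eq_two]
    refine ⟨[false], [true], by simp, ?_⟩
    ext u
    simp only [mem_fibStrings, List.length_eq_one_iff, Finset.mem_insert, Finset.mem_singleton]
    constructor
    · rintro ⟨⟨a, rfl⟩, -⟩
      cases a <;> simp
    · rintro (rfl | rfl) <;> exact ⟨⟨_, rfl⟩, List.isChain_singleton _⟩
  | more n ih₀ ih₁ =>
    rw [fibStrings_add_two, Finset.card_union_of_disjoint, Finset.card_image_of_injective _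
      (List.cons_injective), Finset.card_image_of_injective _ (fun _ _ h => by simpa using h),
      ih₀, ih₁, Nat.fib_add_two (n := n + 2), add_comm]
    rw [Finset.disjoint_left]
    simp

noncomputable def fibPalindromes (n : ℕ) : Finset (List Bool) :=
  (fibStrings n).filter fun u => u.reverse = u

lemma mem_fibPalindromes {u : List Bool} {n : ℕ} :
    u ∈ fibPalindromes n ↔ u.length = n ∧ IsFibStr u ∧ u.reverse = u := by
  rw [fibPalindromes, Finset.mem_filter, mem_fibStrings, and_assoc]

lemma isFibStr_append_reverse {w : List Bool} :
    IsFibStr (w ++ w.reverse) ↔ IsFibStr w ∧ w.getLast? ≠ some true := by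
  rw [isFibStr_iff_isChain, List.isChain_append, ← isFibStr_iff_isChain,
    ← isFibStr_iff_isChain, isFibStr_reverse, List.head?_reverse]
  cases w.getLast? with
  | none => simp
  | some c => cases c <;> simp

lemma isFibStr_dropLast_append_reverse {w : List Bool} (hw : IsFibStr w) :
    IsFibStr (w.dropLast ++ w.reverse) := by
  rcases List.eq_nil_or_concat w with rfl | ⟨x, c, rfl⟩
  · exact hw
  rw [List.concat_eq_append, isFibStr_iff_isChain, List.isChain_append] at hw
  rw [List.concat_eq_append, List.dropLast_concat, isFibStr_iff_isChain, List.isChain_append,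
    List.isChain_reverse, List.head?_reverse, List.getLast?_concat]
  refine ⟨hw.1, (List.isChain_append.2 ⟨hw.1, List.isChain_singleton c, hw.2.2⟩).imp ?_, hw.2.2⟩
  exact fun _ _ => Or.symm

lemma card_fibPalindromes_zero : (fibPalindromes 0).card = 1 := by
  rw [Finset.card_eq_one]
  exact ⟨[], by ext u; simp +contextual [mem_fibPalindromes, List.length_eq_zero_iff,
    isFibStr_iff_isChain]⟩

lemma card_fibPalindromes_two_mul_add_two (m : ℕ) :
    (fibPalindromes (2 * m + 2)).card = (fibStrings m).card := by
  symm
  refine Finset.card_nbij' (fun v => (v ++ [false]) ++ (v ++ [false]).reverse)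
    (fun u => u.take m) ?_ ?_ ?_ ?_
  · intro v hv
    obtain ⟨hlen, hv⟩ := mem_fibStrings.1 hv
    refine mem_fibPalindromes.2 ⟨by simp [hlen]; omega, ?_, by simp⟩
    exact isFibStr_append_reverse.2 ⟨isFibStr_append_false.2 hv, by simp⟩
  · intro u hu
    obtain ⟨hlen, hu, -⟩ := mem_fibPalindromes.1 hu
    exact mem_fibStrings.2 ⟨by simp [hlen]; omega, hu.take m⟩
  · intro v hv
    simp [List.take_left' (mem_fibStrings.1 hv).1]
  · intro u hu
    obtain ⟨hlen, hu, hrev⟩ := mem_fibPalindromes.1 hu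
    have hhalf := List.take_append_reverse_take_of_reverse_eq_self hrev
      (a := m + 1) (b := m + 1) (by omega)
    rw [← List.take_append_getElem (by omega : m < u.length)] at hhalf
    -- the two middle letters of a palindrome coincide, so neither is `1`
    have hmid : u[m] = false := by
      have := (isFibStr_append_reverse.1 (hhalf ▸ hu)).2
      rw [List.getLast?_concat] at this
      simpa using this
    dsimp only
    rw [← hmid]
    exact hhalf

lemma card_fibPalindromes_two_mul_add_one (k : ℕ) :
    (fibPalindromes (2 * k + 1)).card = (fibStrings (k + 1)).card := by
  symm
  refine Finset.card_nbij' (fun v => v.dropLast ++ v.reverse) (fun u => u.take (k + 1))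
    ?_ ?_ ?_ ?_
  · intro v hv
    obtain ⟨hlen, hv⟩ := mem_fibStrings.1 hv
    exact mem_fibPalindromes.2 ⟨by simp [hlen]; omega, isFibStr_dropLast_append_reverse hv,
      by rw [List.reverse_append, List.reverse_reverse, List.append_reverse_dropLast]⟩
  · intro u hu
    obtain ⟨hlen, hu, -⟩ := mem_fibPalindromes.1 hu
    exact mem_fibStrings.2 ⟨by simp [hlen]; omega, hu.take _⟩
  · intro v hv
    dsimp only
    rw [← List.append_reverse_dropLast, List.take_left' (mem_fibStrings.1 hv).1]
  · intro u hu
    obtain ⟨hlen, -, hrev⟩ := mem_fibPalindromes.1 hu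
    dsimp only
    have htake : (u.take (k + 1)).dropLast = u.take k := by
      rw [List.dropLast_eq_take, List.take_take, List.length_take]
      congr 1
      omega
    rw [htake]
    exact List.take_append_reverse_take_of_reverse_eq_self hrev (a := k) (b := k + 1) (by omega)

lemma card_fibPalindromes (n : ℕ) :
    (fibPalindromes n).card = Nat.fib ((((n : ℤ) - (-1 : ℤ) ^ n) / 2).toNat + 2) := by
  obtain ⟨k, rfl | rfl⟩ := Nat.even_or_odd' n
  · rw [(even_two_mul k).neg_one_pow]
    rcases k with _ | m
    -- the index is `((0 - 1) / 2).toNat + 2 = 2` here, and `F₂ = F₁`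
    · rw [card_fibPalindromes_zero]
      rfl
    · rw [show 2 * (m + 1) = 2 * m + 2 by ring, card_fibPalindromes_two_mul_add_two,
        card_fibStrings]
      congr 2
      omega
  · rw [(odd_two_mul_add_one k).neg_one_pow, card_fibPalindromes_two_mul_add_one,
      card_fibStrings]
    congr 2
    omega

lemma revOrbit_eq_pairOrbit : revOrbit = pairOrbit List.reverse := rfl

theorem fib_vertex_orbits_general (n : ℕ) :
    ((((fibStrings n).image revOrbit).filter fun O => O.card = 1).card
        = Nat.fib ((((n : ℤ) - (-1 : ℤ) ^ n) / 2).toNat + 2)) ∧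
    (((((fibStrings n).image revOrbit).filter fun O => O.card = 2).card : ℚ)
        = ((Nat.fib (n + 2) : ℚ)
            - (Nat.fib ((((n : ℤ) - (-1 : ℤ) ^ n) / 2).toNat + 2) : ℚ)) / 2) ∧
    ((((fibStrings n).image revOrbit).card : ℚ)
        = ((Nat.fib (n + 2) : ℚ)
            + (Nat.fib ((((n : ℤ) - (-1 : ℤ) ^ n) / 2).toNat + 2) : ℚ)) / 2) := by
  rw [revOrbit_eq_pairOrbit]
  have hfixed := card_filter_image_pairOrbit_card_eq_one (f := List.reverse) (fibStrings n)
  rw [← fibPalindromes, card_fibPalindromes] at hfixed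
  have hsplit := card_eq_card_pairOrbit_one_add_two_mul List.reverse_involutive
    fun _ => reverse_mem_fibStrings (n := n)
  have htotal := card_image_pairOrbit (f := List.reverse) (fibStrings n)
  rw [card_fibStrings, hfixed] at hsplit
  rw [hfixed] at htotal
  refine ⟨hfixed, ?_, ?_⟩ <;> rw [eq_div_iff two_ne_zero] <;> push_cast [hsplit, htotal] <;> ring

/-- Vertex orbits of the Fibonacci cube `Γₙ` under the reversal map, for `n ≥ 2`:
there are `F_{⌊(n−(−1)ⁿ)/2⌋+2}` orbits of size 1, `(F_{n+2} − F_{⌊(n−(−1)ⁿ)/2⌋+2})/2`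
orbits of size 2, and `(F_{n+2} + F_{⌊(n−(−1)ⁿ)/2⌋+2})/2` orbits in total. -/
theorem fib_vertex_orbits (n : ℕ) (hn : 2 ≤ n) :
    ((((fibStrings n).image revOrbit).filter fun O => O.card = 1).card
        = Nat.fib ((((n : ℤ) - (-1 : ℤ) ^ n) / 2).toNat + 2)) ∧
    (((((fibStrings n).image revOrbit).filter fun O => O.card = 2).card : ℚ)
        = ((Nat.fib (n + 2) : ℚ)
            - (Nat.fib ((((n : ℤ) - (-1 : ℤ) ^ n) / 2).toNat + 2) : ℚ)) / 2) ∧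
    ((((fibStrings n).image revOrbit).card : ℚ)
        = ((Nat.fib (n + 2) : ℚ)
            + (Nat.fib ((((n : ℤ) - (-1 : ℤ) ^ n) / 2).toNat + 2) : ℚ)) / 2) :=
  fib_vertex_orbits_general n
end
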